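/- arXiv:2101.07604 — 4 statements merged into one kernel-verified Lean document; each statement's English description precedes it below -/
import Mathlib

section
/- Let ξ be a random variable with standard Gaussian law N(0,1) on a probability space (Ω, F, P). Define f(x) = (min(max(x,0),1))^{3/4} and g(x) = (3/4)·x^{-1/4} for 0 < x < 1 and g(x) = 0 otherwise, and for ε > 0 set F_ε = √ε·(f(ξ)·ξ − g(ξ)). Then for every α > 0: limsup_{L→∞} limsup_{ε→0⁺} ε^α · log P(|F_ε| > L) = 0. -/
open MeasureTheory ProbabilityTheory Filter Set

/-- `f x = (min (max x 0) 1)^(3/4)`, the function of the paper's counterexample. -/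
noncomputable def f (x : ℝ) : ℝ := (min (max x 0) 1) ^ ((3 : ℝ) / 4)

/-- `g` is the a.e. derivative of `f`: `g x = (3/4) x^(-1/4)` on `(0,1)` and `0` elsewhere. -/
noncomputable def g (x : ℝ) : ℝ :=
  if 0 < x ∧ x < 1 then (3 / 4 : ℝ) * x ^ (-(1 / 4 : ℝ)) else 0

/-!
The singularity of `g` at `0⁺` makes `|F_ε|` large on an event of polynomial size.
If `0 < ξ < c_L ε²`, with `c_L = (3 / (4 (L + 1)))⁴`, then `√ε · g(ξ) > L + 1` while
`√ε · |f(ξ) ξ| ≤ 1`, so `|F_ε| > L`; the Gaussian density is at least its value at `1` there,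
so this event has probability at least `K_L ε²`. Hence
`0 ≥ ε^α log P(|F_ε| > L) ≥ ε^α log (K_L ε²) → 0` for every `L ≥ 0`.
-/

open scoped Topology

lemma tendsto_rpow_mul_log_const_mul_pow {α K : ℝ} (n : ℕ) (hα : 0 < α) (hK : 0 < K) :
    Tendsto (fun ε : ℝ => ε ^ α * Real.log (K * ε ^ n)) (𝓝[>] 0) (𝓝 0) := by
  have hrpow : Tendsto (fun ε : ℝ => ε ^ α) (𝓝[>] 0) (𝓝 0) := by
    simpa [Real.zero_rpow hα.ne'] using
      ((Real.continuousAt_rpow_const 0 α (Or.inr hα.le)).tendsto).mono_left nhdsWithin_le_nhds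
  have hsum := (hrpow.mul_const (Real.log K)).add
    ((tendsto_log_mul_rpow_nhdsGT_zero hα).const_mul (n : ℝ))
  rw [zero_mul, mul_zero, add_zero] at hsum
  refine hsum.congr' ?_
  filter_upwards [self_mem_nhdsWithin] with ε (hε : 0 < ε)
  rw [Real.log_mul hK.ne' (pow_pos hε n).ne', Real.log_pow]
  ring

lemma tendsto_rpow_mul_log_of_pow_le {p : ℝ → ENNReal} {α K : ℝ} (n : ℕ) (hα : 0 < α)
    (hK : 0 < K) (hp : ∀ᶠ ε in 𝓝[>] 0, ENNReal.ofReal (K * ε ^ n) ≤ p ε ∧ p ε ≤ 1) :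
    Tendsto (fun ε : ℝ => ((ε ^ α : ℝ) : EReal) * ENNReal.log (p ε)) (𝓝[>] 0) (𝓝 0) := by
  have hp' : ∀ᶠ ε in 𝓝[>] 0, K * ε ^ n ≤ (p ε).toReal ∧ (p ε).toReal ≤ 1 ∧
      0 < K * ε ^ n ∧ 0 ≤ ε ^ α := by
    filter_upwards [hp, self_mem_nhdsWithin] with ε ⟨hlow, hle⟩ (hε : 0 < ε)
    have hne_top : p ε ≠ ⊤ := ne_top_of_le_ne_top ENNReal.one_ne_top hle
    exact ⟨(ENNReal.ofReal_le_iff_le_toReal hne_top).mp hlow,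
      ENNReal.toReal_le_of_le_ofReal zero_le_one (by simpa using hle),
      by positivity, Real.rpow_nonneg hε.le α⟩
  have hreal : Tendsto (fun ε : ℝ => ε ^ α * Real.log (p ε).toReal) (𝓝[>] 0) (𝓝 0) := by
    refine tendsto_of_tendsto_of_tendsto_of_le_of_le'
      (tendsto_rpow_mul_log_const_mul_pow n hα hK) tendsto_const_nhds ?_ ?_
    · filter_upwards [hp'] with ε ⟨hlow, _, hpos, hrpow⟩
      exact mul_le_mul_of_nonneg_left (Real.log_le_log hpos hlow) hrpow
    · filter_upwards [hp'] with ε ⟨_, hle, _, hrpow⟩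
      exact mul_nonpos_of_nonneg_of_nonpos hrpow (Real.log_nonpos ENNReal.toReal_nonneg hle)
  have hcoe := (continuous_coe_real_ereal.tendsto 0).comp hreal
  rw [EReal.coe_zero] at hcoe
  refine hcoe.congr' ?_
  filter_upwards [hp'] with ε ⟨hlow, _, hpos, _⟩
  rw [Function.comp_apply, ENNReal.log_pos_real' (hpos.trans_le hlow), EReal.coe_mul]

lemma gaussianPDFReal_le_of_abs_sub_le (μ : ℝ) (v : NNReal) {x y : ℝ}
    (h : |x - μ| ≤ |y - μ|) : gaussianPDFReal μ v y ≤ gaussianPDFReal μ v x := by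
  simp only [gaussianPDFReal_def]
  refine mul_le_mul_of_nonneg_left (Real.exp_le_exp.mpr ?_) (by positivity)
  exact div_le_div_of_nonneg_right (neg_le_neg (sq_le_sq.mpr h)) (by positivity)

lemma ofReal_mul_le_gaussianReal_Ioo (μ : ℝ) {v : NNReal} (hv : v ≠ 0) {a b r : ℝ}
    (ha : μ - r ≤ a) (hb : b ≤ μ + r) :
    ENNReal.ofReal (gaussianPDFReal μ v (μ + r) * (b - a)) ≤ gaussianReal μ v (Ioo a b) := by
  have hdensity : ∀ x ∈ Ioo a b, ENNReal.ofReal (gaussianPDFReal μ v (μ + r)) ≤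
      gaussianPDF μ v x := fun x ⟨hax, hxb⟩ => by
    refine ENNReal.ofReal_le_ofReal (gaussianPDFReal_le_of_abs_sub_le μ v ?_)
    rw [add_sub_cancel_left]
    exact (abs_sub_le_iff.mpr ⟨by linarith, by linarith⟩).trans (le_abs_self r)
  calc ENNReal.ofReal (gaussianPDFReal μ v (μ + r) * (b - a))
      = ∫⁻ _ in Ioo a b, ENNReal.ofReal (gaussianPDFReal μ v (μ + r)) := by
        rw [setLIntegral_const, Real.volume_Ioo,
          ENNReal.ofReal_mul (gaussianPDFReal_nonneg μ v _)]
    _ ≤ ∫⁻ x in Ioo a b, gaussianPDF μ v x :=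
        setLIntegral_mono (measurable_gaussianPDF μ v) hdensity
    _ = gaussianReal μ v (Ioo a b) := (gaussianReal_apply μ hv _).symm

lemma f_mem_Icc (x : ℝ) : f x ∈ Icc 0 1 :=
  ⟨Real.rpow_nonneg (by positivity) _,
    Real.rpow_le_one (by positivity) (min_le_right _ _) (by norm_num)⟩

lemma three_div_four_mul_lt_g {c x : ℝ} (hc : 0 < c) (hx : x ∈ Ioo 0 (c ^ 4)) (hx1 : x < 1) :
    3 / (4 * c) < g x := by
  have hpow : (c ^ 4) ^ (-(1 / 4 : ℝ)) = c⁻¹ := by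
    rw [← Real.rpow_natCast, ← Real.rpow_mul hc.le]
    norm_num [Real.rpow_neg_one]
  have hlt : c⁻¹ < x ^ (-(1 / 4 : ℝ)) :=
    hpow ▸ Real.rpow_lt_rpow_of_neg hx.1 hx.2 (by norm_num)
  rw [g, if_pos ⟨hx.1, hx1⟩, div_mul_eq_div_div, div_eq_mul_inv _ c]
  gcongr

lemma lt_abs_mul_f_mul_sub_g {L s x : ℝ} (hL : 0 ≤ L) (hs : s ∈ Ioo 0 1)
    (hx : x ∈ Ioo 0 ((3 * s / (4 * (L + 1))) ^ 4)) :
    L < |s * (f x * x - g x)| := by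
  obtain ⟨hs0, hs1⟩ := hs
  set c := 3 * s / (4 * (L + 1)) with hc_def
  have hc : 0 < c := by positivity
  have hc1 : c < 1 := by
    rw [div_lt_one (by positivity)]
    nlinarith
  have hx1 : x < 1 := hx.2.trans (pow_lt_one₀ hc.le hc1 (by norm_num))
  have hg : L + 1 < s * g x := by
    have h := mul_lt_mul_of_pos_left (three_div_four_mul_lt_g hc hx hx1) hs0
    rwa [hc_def, show s * (3 / (4 * (3 * s / (4 * (L + 1))))) = L + 1 by field_simp] at h
  have hfx : s * (f x * x) ≤ 1 := by
    have := mul_le_one₀ (f_mem_Icc x).2 hx.1.le hx1.le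
    nlinarith
  calc L < s * g x - s * (f x * x) := by linarith
    _ = -(s * (f x * x - g x)) := by ring
    _ ≤ |s * (f x * x - g x)| := neg_le_abs _

lemma ofReal_mul_sq_le_measure_lt_abs {Ω : Type*} [MeasurableSpace Ω] {P : Measure Ω}
    {ξ : Ω → ℝ} (hξ : Measurable ξ) (hlaw : P.map ξ = gaussianReal 0 1) {L ε : ℝ} (hL : 0 ≤ L)
    (hε : ε ∈ Ioo 0 1) :
    ENNReal.ofReal (gaussianPDFReal 0 1 1 * (3 / (4 * (L + 1))) ^ 4 * ε ^ 2) ≤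
      P {ω | L < |Real.sqrt ε * (f (ξ ω) * ξ ω - g (ξ ω))|} := by
  set δ := (3 * Real.sqrt ε / (4 * (L + 1))) ^ 4
  have hδ : δ = (3 / (4 * (L + 1))) ^ 4 * ε ^ 2 := by
    rw [show ε ^ 2 = Real.sqrt ε ^ 4 by
      rw [show 4 = 2 * 2 by rfl, pow_mul, Real.sq_sqrt hε.1.le]]
    ring
  have hδ1 : δ ≤ 1 := by
    rw [hδ]
    have hc : 3 / (4 * (L + 1)) ≤ 1 := by rw [div_le_one (by positivity)]; linarith
    exact mul_le_one₀ (pow_le_one₀ (by positivity) hc) (by positivity)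
      (pow_le_one₀ hε.1.le hε.2.le)
  have hsqrt : Real.sqrt ε ∈ Ioo 0 1 :=
    ⟨Real.sqrt_pos.mpr hε.1, Real.sqrt_one ▸ Real.sqrt_lt_sqrt hε.1.le hε.2⟩
  calc ENNReal.ofReal (gaussianPDFReal 0 1 1 * (3 / (4 * (L + 1))) ^ 4 * ε ^ 2)
      = ENNReal.ofReal (gaussianPDFReal 0 1 (0 + 1) * (δ - 0)) := by
        rw [zero_add, sub_zero, hδ, mul_assoc]
    _ ≤ gaussianReal 0 1 (Ioo 0 δ) :=
        ofReal_mul_le_gaussianReal_Ioo 0 one_ne_zero (by norm_num) (by simpa using hδ1)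
    _ = P (ξ ⁻¹' Ioo 0 δ) := by rw [← hlaw, Measure.map_apply hξ measurableSet_Ioo]
    _ ≤ _ := measure_mono fun ω hω => lt_abs_mul_f_mul_sub_g hL hsqrt hω

theorem stmt_0 {Ω : Type*} [MeasurableSpace Ω] (P : Measure Ω) [IsProbabilityMeasure P]
    (ξ : Ω → ℝ) (hξ : Measurable ξ) (hlaw : P.map ξ = gaussianReal 0 1)
    (F : ℝ → Ω → ℝ)
    (hF : ∀ ε ω, F ε ω = Real.sqrt ε * (f (ξ ω) * ξ ω - g (ξ ω)))
    (α : ℝ) (hα : 0 < α) :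
    limsup (fun L : ℝ =>
        limsup (fun ε : ℝ => ((ε ^ α : ℝ) : EReal) * ENNReal.log (P {ω | L < |F ε ω|}))
          (nhdsWithin (0 : ℝ) (Ioi 0))) atTop = 0 := by
  obtain rfl : F = fun ε ω => Real.sqrt ε * (f (ξ ω) * ξ ω - g (ξ ω)) :=
    funext fun ε => funext (hF ε)
  have hinner : ∀ᶠ L in atTop,
      limsup (fun ε : ℝ => ((ε ^ α : ℝ) : EReal) *
        ENNReal.log (P {ω | L < |Real.sqrt ε * (f (ξ ω) * ξ ω - g (ξ ω))|}))
        (nhdsWithin (0 : ℝ) (Ioi 0)) = 0 := by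
    filter_upwards [eventually_ge_atTop 0] with L hL
    have hK : 0 < gaussianPDFReal 0 1 1 * (3 / (4 * (L + 1))) ^ 4 := by
      have := gaussianPDFReal_pos 0 1 1 one_ne_zero
      positivity
    refine (tendsto_rpow_mul_log_of_pow_le 2 hα hK ?_).limsup_eq
    filter_upwards [Ioo_mem_nhdsGT one_pos] with ε hε
    exact ⟨ofReal_mul_sq_le_measure_lt_abs hξ hlaw hL hε, prob_le_one⟩
  rw [limsup_congr hinner, limsup_const]
end

section
/- Let ξ be a random variable with standard Gaussian law N(0,1). Define f(x) = (min(max(x,0),1))^{3/4} and g(x) = (3/4)·x^{-1/4} for 0 < x < 1 and g(x) = 0 otherwise, and for ε > 0 set F_ε = √ε·(f(ξ)·ξ − g(ξ)). Then for every α > 0, the family {F_ε}_{ε>0} is NOT exponentially tight with speed ε^α; that is, it is not the case that lim_{L→∞} limsup_{ε→0⁺} ε^α · log P(|F_ε| > L) = −∞. -/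
open MeasureTheory ProbabilityTheory Filter Set

private lemma aux_pdf_bound {x : ℝ} (h0 : 0 < x) (h1 : x < 1) :
    1/5 ≤ gaussianPDFReal 0 1 x := by
  rw [gaussianPDFReal]
  push_cast
  rw [mul_one, mul_one, sub_zero]
  have hsq : Real.sqrt (2*Real.pi) ≤ 3 := by
    rw [show (3:ℝ) = Real.sqrt 9 by
      rw [show (9:ℝ) = 3^2 by norm_num, Real.sqrt_sq (by norm_num)]]
    exact Real.sqrt_le_sqrt (by nlinarith [Real.pi_lt_d2])
  have hsqpos : 0 < Real.sqrt (2*Real.pi) := Real.sqrt_pos.2 (by positivity)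
  have hexp : 3/5 ≤ Real.exp (-x^2/2) := by
    have h1' : Real.exp (-(1/2)) ≤ Real.exp (-x^2/2) := by
      apply Real.exp_le_exp.2; nlinarith
    have h2 : Real.exp (1/2) ≤ 5/3 := by
      have h : Real.exp (1/2) * Real.exp (1/2) = Real.exp 1 := by
        rw [← Real.exp_add]; norm_num
      nlinarith [Real.exp_pos (1/2:ℝ), Real.exp_one_lt_d9]
    have h3 : 3/5 ≤ Real.exp (-(1/2)) := by
      rw [Real.exp_neg, le_inv_comm₀ (by norm_num) (Real.exp_pos _)]
      linarith
    linarith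
  have hinv : 1/3 ≤ (Real.sqrt (2*Real.pi))⁻¹ := by
    rw [le_inv_comm₀ (by norm_num) hsqpos]; linarith
  calc (1:ℝ)/5 = (1/3)*(3/5) := by norm_num
    _ ≤ _ := mul_le_mul hinv hexp (by norm_num) (by positivity)

private lemma aux_gauss_bound {δ : ℝ} (h0 : 0 < δ) (h1 : δ < 1) :
    ENNReal.ofReal (1/5 * δ) ≤ gaussianReal 0 1 (Ioo 0 δ) := by
  rw [gaussianReal_apply 0 one_ne_zero]
  calc ENNReal.ofReal (1/5 * δ) = ENNReal.ofReal (1/5) * volume (Ioo (0:ℝ) δ) := by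
        rw [Real.volume_Ioo, sub_zero, ← ENNReal.ofReal_mul (by norm_num)]
    _ = ∫⁻ _ in Ioo (0:ℝ) δ, ENNReal.ofReal (1/5) := (setLIntegral_const _ _).symm
    _ ≤ ∫⁻ x in Ioo (0:ℝ) δ, gaussianPDF 0 1 x := by
        refine setLIntegral_mono (measurable_gaussianPDF 0 1) fun x hx => ?_
        exact ENNReal.ofReal_le_ofReal (aux_pdf_bound hx.1 (hx.2.trans h1))

private lemma aux_incl {ε L x : ℝ} (hε0 : 0 < ε) (hε1 : ε < 1) (hL : 1 ≤ L)
    (hx0 : 0 < x) (hxδ : x < (Real.sqrt ε / (4*(L+1)))^4) :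
    L < |Real.sqrt ε * (f x * x - g x)| := by
  set d : ℝ := Real.sqrt ε / (4*(L+1)) with hd_def
  have hs0 : 0 < Real.sqrt ε := Real.sqrt_pos.2 hε0
  have hs1 : Real.sqrt ε < 1 := by
    rw [show (1:ℝ) = Real.sqrt 1 by simp]
    exact Real.sqrt_lt_sqrt hε0.le hε1
  have hd0 : 0 < d := by positivity
  have hd8 : d < 1/8 := by
    rw [hd_def, div_lt_iff₀ (by linarith)]
    nlinarith
  have hδ1 : d^4 < 1 := by
    have := pow_lt_pow_left₀ hd8 hd0.le (n := 4) (by norm_num)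
    nlinarith
  have hx1 : x < 1 := hxδ.trans hδ1
  have hfval : f x = x ^ ((3:ℝ)/4) := by
    rw [f, max_eq_left hx0.le, min_eq_left hx1.le]
  have hgval : g x = (3/4) * x ^ (-(1/4:ℝ)) := by
    rw [g, if_pos ⟨hx0, hx1⟩]
  have hfx1 : f x * x ≤ 1 := by
    rw [hfval]
    calc x ^ ((3:ℝ)/4) * x ≤ 1 * 1 :=
      mul_le_mul (Real.rpow_le_one hx0.le hx1.le (by norm_num)) hx1.le hx0.le zero_le_one
    _ = 1 := by ring
  have hfx0 : 0 ≤ f x * x := by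
    rw [hfval]; positivity
  have hdpow : (d^4) ^ (-(1/4:ℝ)) = d⁻¹ := by
    rw [show (d^4 : ℝ) = d ^ ((4:ℕ):ℝ) by rw [Real.rpow_natCast],
      ← Real.rpow_mul hd0.le]
    norm_num [Real.rpow_neg_one]
  have hxpow : d⁻¹ ≤ x ^ (-(1/4:ℝ)) := by
    rw [← hdpow]
    exact Real.rpow_le_rpow_of_nonpos hx0 hxδ.le (by norm_num)
  have hsd : Real.sqrt ε * d⁻¹ = 4*(L+1) := by
    rw [hd_def]
    field_simp
  have hg0 : 0 ≤ g x := by rw [hgval]; positivity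
  have hsg : 3*(L+1) ≤ Real.sqrt ε * g x := by
    rw [hgval]
    calc (3:ℝ)*(L+1) = (3/4) * (Real.sqrt ε * d⁻¹) := by rw [hsd]; ring
    _ ≤ (3/4) * (Real.sqrt ε * x ^ (-(1/4:ℝ))) := by
        have := mul_le_mul_of_nonneg_left hxpow hs0.le
        nlinarith
    _ = Real.sqrt ε * ((3/4) * x ^ (-(1/4:ℝ))) := by ring
  have hneg : f x * x - g x < 0 := by nlinarith
  rw [abs_mul, abs_of_nonneg (Real.sqrt_nonneg ε), abs_of_neg hneg]
  nlinarith [mul_le_mul_of_nonneg_left hfx1 hs0.le]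

theorem stmt_1 {Ω : Type*} [MeasurableSpace Ω] (P : Measure Ω) [IsProbabilityMeasure P]
    (ξ : Ω → ℝ) (hξ : Measurable ξ) (hlaw : P.map ξ = gaussianReal 0 1)
    (F : ℝ → Ω → ℝ)
    (hF : ∀ ε ω, F ε ω = Real.sqrt ε * (f (ξ ω) * ξ ω - g (ξ ω)))
    (α : ℝ) (hα : 0 < α) :
    ¬ Tendsto (fun L : ℝ =>
        limsup (fun ε : ℝ => ((ε ^ α : ℝ) : EReal) * ENNReal.log (P {ω | L < |F ε ω|}))
          (nhdsWithin (0 : ℝ) (Ioi 0))) atTop (nhds (⊥ : EReal)) := by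
  intro h
  have h1 : ∀ᶠ L in atTop,
      limsup (fun ε : ℝ => ((ε ^ α : ℝ) : EReal) * ENNReal.log (P {ω | L < |F ε ω|}))
        (nhdsWithin (0 : ℝ) (Ioi 0)) < ((-1:ℝ) : EReal) :=
    h.eventually_lt_const (EReal.bot_lt_coe (-1))
  obtain ⟨L, hLlim, hL1⟩ := (h1.and (eventually_ge_atTop (1:ℝ))).exists
  have h2 : ∀ᶠ ε in nhdsWithin (0:ℝ) (Ioi 0),
      ((ε ^ α : ℝ) : EReal) * ENNReal.log (P {ω | L < |F ε ω|}) < ((-1:ℝ) : EReal) :=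
    eventually_lt_of_limsup_lt hLlim
  set C : ℝ := 4 * Real.log (4*(L+1)) + Real.log 5 with hC
  have hb : Tendsto (fun ε : ℝ => 2*(Real.log ε * ε^α) - C*ε^α)
      (nhdsWithin (0:ℝ) (Ioi 0)) (nhds 0) := by
    have t1 : Tendsto (fun ε : ℝ => Real.log ε * ε^α) (nhdsWithin 0 (Ioi 0)) (nhds 0) :=
      tendsto_log_mul_rpow_nhdsGT_zero hα
    have t2 : Tendsto (fun ε : ℝ => ε^α) (nhdsWithin 0 (Ioi 0)) (nhds 0) := by
      have := (Real.continuousAt_rpow_const 0 α (Or.inr hα.le)).continuousWithinAt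
        (s := Ioi (0:ℝ))
      simpa [Real.zero_rpow hα.ne', ContinuousWithinAt] using this
    have := (t1.const_mul 2).sub (t2.const_mul C)
    simpa using this
  have h3 : ∀ᶠ ε in nhdsWithin (0:ℝ) (Ioi 0), (-1:ℝ) < 2*(Real.log ε * ε^α) - C*ε^α :=
    hb.eventually_const_lt (by norm_num)
  have h4 : ∀ᶠ ε in nhdsWithin (0:ℝ) (Ioi 0), ε ∈ Ioo (0:ℝ) 1 :=
    Ioo_mem_nhdsGT_of_mem ⟨le_refl 0, one_pos⟩
  obtain ⟨ε, hlt, hgt, hε0, hε1⟩ := (h2.and (h3.and h4)).exists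
  -- now derive a contradiction at this ε
  set d : ℝ := Real.sqrt ε / (4*(L+1)) with hd_def
  have hs0 : 0 < Real.sqrt ε := Real.sqrt_pos.2 hε0
  have hL40 : (0:ℝ) < 4*(L+1) := by linarith
  have hd0 : 0 < d := div_pos hs0 hL40
  set δ : ℝ := d^4 with hδ_def
  have hδ0 : 0 < δ := by positivity
  have hs1 : Real.sqrt ε < 1 := by
    rw [show (1:ℝ) = Real.sqrt 1 by simp]
    exact Real.sqrt_lt_sqrt hε0.le hε1
  have hd8 : d < 1/8 := by
    rw [hd_def, div_lt_iff₀ hL40]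
    nlinarith
  have hδ1 : δ < 1 := by
    have := pow_lt_pow_left₀ hd8 hd0.le (n := 4) (by norm_num)
    rw [hδ_def]
    nlinarith
  have hincl : ξ ⁻¹' (Ioo 0 δ) ⊆ {ω | L < |F ε ω|} := by
    intro ω hω
    simp only [mem_setOf_eq, hF]
    exact aux_incl hε0 hε1 hL1 hω.1 hω.2
  have hmeas : ENNReal.ofReal (1/5*δ) ≤ P {ω | L < |F ε ω|} := by
    calc ENNReal.ofReal (1/5*δ) ≤ gaussianReal 0 1 (Ioo 0 δ) := aux_gauss_bound hδ0 hδ1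
    _ = P.map ξ (Ioo 0 δ) := by rw [hlaw]
    _ = P (ξ ⁻¹' Ioo 0 δ) := Measure.map_apply hξ measurableSet_Ioo
    _ ≤ P {ω | L < |F ε ω|} := measure_mono hincl
  have hlog : ((Real.log (1/5*δ) : ℝ) : EReal) ≤ ENNReal.log (P {ω | L < |F ε ω|}) := by
    rw [← ENNReal.log_ofReal_of_pos (by positivity)]
    exact ENNReal.log_monotone hmeas
  have hmul : ((ε^α * Real.log (1/5*δ) : ℝ) : EReal)
      ≤ ((ε ^ α : ℝ) : EReal) * ENNReal.log (P {ω | L < |F ε ω|}) := by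
    rw [EReal.coe_mul]
    exact mul_le_mul_of_nonneg_left hlog
      (by exact_mod_cast Real.rpow_nonneg hε0.le α)
  have heq : ε^α * Real.log (1/5*δ) = 2*(Real.log ε * ε^α) - C*ε^α := by
    rw [hδ_def, Real.log_mul (by norm_num) (by positivity), one_div, Real.log_inv,
      Real.log_pow, hd_def, Real.log_div hs0.ne' hL40.ne', Real.log_sqrt hε0.le, hC]
    push_cast
    ring
  have hfinal : ((-1:ℝ) : EReal) <
      ((ε ^ α : ℝ) : EReal) * ENNReal.log (P {ω | L < |F ε ω|}) := by
    refine lt_of_lt_of_le ?_ hmul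
    exact_mod_cast (heq ▸ hgt : (-1:ℝ) < ε^α * Real.log (1/5*δ))
  exact lt_irrefl _ (hfinal.trans hlt)
end

section
/- Let Y be a nonnegative random variable, let α > 0 and η < 0, and suppose that limsup_{L→∞} limsup_{ε→0⁺} ε^α · log P(Y > L·ε^{-1/2}) ≤ η. Then there exist constants c₀ > 0 and t₀ > 0 such that P(Y^{α/2} > t) ≤ exp(−c₀·t²) for all t > t₀. -/
open MeasureTheory Filter Set

theorem stmt_3 {Ω : Type*} [MeasurableSpace Ω] (P : Measure Ω) [IsProbabilityMeasure P]
    (Y : Ω → ℝ) (hmeas : Measurable Y) (hpos : ∀ ω, 0 ≤ Y ω)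
    (α η : ℝ) (hα : 0 < α) (hη : η < 0)
    (h : limsup (fun L : ℝ =>
        limsup (fun ε : ℝ => ((ε ^ α : ℝ) : EReal) *
            ENNReal.log (P {ω | L * ε ^ (-(1 / 2 : ℝ)) < Y ω}))
          (nhdsWithin (0 : ℝ) (Ioi 0))) atTop ≤ (η : EReal)) :
    ∃ c₀ > (0 : ℝ), ∃ t₀ > (0 : ℝ), ∀ t > t₀,
      P {ω | t < Y ω ^ (α / 2)} ≤ ENNReal.ofReal (Real.exp (-c₀ * t ^ 2)) := by
  have hη2 : (η : EReal) < ((η / 2 : ℝ) : EReal) := by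
    exact_mod_cast (by linarith : η < η / 2)
  have h1 : ∀ᶠ L in (atTop : Filter ℝ),
      limsup (fun ε : ℝ => ((ε ^ α : ℝ) : EReal) *
            ENNReal.log (P {ω | L * ε ^ (-(1 / 2 : ℝ)) < Y ω}))
          (nhdsWithin (0 : ℝ) (Ioi 0)) < ((η / 2 : ℝ) : EReal) :=
    eventually_lt_of_limsup_lt (lt_of_le_of_lt h hη2)
  obtain ⟨L, hLlim, hL1⟩ := (h1.and (eventually_ge_atTop (1 : ℝ))).exists
  have hL0 : (0 : ℝ) < L := lt_of_lt_of_le one_pos hL1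
  have h2 : ∀ᶠ ε in nhdsWithin (0 : ℝ) (Ioi 0),
      ((ε ^ α : ℝ) : EReal) *
        ENNReal.log (P {ω | L * ε ^ (-(1 / 2 : ℝ)) < Y ω}) < ((η / 2 : ℝ) : EReal) :=
    eventually_lt_of_limsup_lt hLlim
  obtain ⟨δ, hδpos, hsub⟩ := mem_nhdsGT_iff_exists_Ioo_subset.mp h2
  have hδ0 : (0 : ℝ) < δ := hδpos
  set A : ℝ := L ^ (2 * α) with hA_def
  have hA : (0 : ℝ) < A := Real.rpow_pos_of_pos hL0 _
  refine ⟨-η / (2 * A), div_pos (by linarith) (by linarith), ?_⟩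
  refine ⟨max 1 ((L ^ (2 : ℝ) / δ) ^ (α / 4)), lt_of_lt_of_le one_pos (le_max_left _ _), ?_⟩
  intro t ht
  have ht1 : (1 : ℝ) < t := lt_of_le_of_lt (le_max_left _ _) ht
  have ht0 : (0 : ℝ) < t := lt_trans one_pos ht1
  have htδ : (L ^ (2 : ℝ) / δ) ^ (α / 4) < t := lt_of_le_of_lt (le_max_right _ _) ht
  set ε : ℝ := L ^ (2 : ℝ) * t ^ (-(4 / α)) with hε_def
  have hε0 : (0 : ℝ) < ε := by positivity
  -- ε < δ
  have hLδ0 : (0 : ℝ) < L ^ (2 : ℝ) / δ := by positivity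
  have hT : L ^ (2 : ℝ) / δ < t ^ (4 / α) := by
    have h4α : (0 : ℝ) < 4 / α := by positivity
    have := Real.rpow_lt_rpow (Real.rpow_nonneg hLδ0.le _) htδ h4α
    rwa [← Real.rpow_mul hLδ0.le, show α / 4 * (4 / α) = 1 by field_simp,
      Real.rpow_one] at this
  have ht4α : (0 : ℝ) < t ^ (4 / α) := Real.rpow_pos_of_pos ht0 _
  have hεδ : ε < δ := by
    rw [hε_def, Real.rpow_neg ht0.le]
    have hL2 : L ^ (2 : ℝ) < t ^ (4 / α) * δ := by
      rw [div_lt_iff₀ hδ0] at hT; linarith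
    calc L ^ (2 : ℝ) * (t ^ (4 / α))⁻¹ < (t ^ (4 / α) * δ) * (t ^ (4 / α))⁻¹ :=
          mul_lt_mul_of_pos_right hL2 (by positivity)
      _ = δ := by field_simp
  -- key identities
  have hkey : L * ε ^ (-(1 / 2 : ℝ)) = t ^ (2 / α) := by
    rw [hε_def, Real.mul_rpow (by positivity) (by positivity),
      ← Real.rpow_mul hL0.le, ← Real.rpow_mul ht0.le,
      show (2 : ℝ) * -(1 / 2) = -1 by ring, show -(4 / α) * -(1 / 2) = 2 / α by ring,
      Real.rpow_neg_one]
    field_simp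
  have hεα : ε ^ α = A * (t ^ 4)⁻¹ := by
    rw [hε_def, Real.mul_rpow (by positivity) (by positivity),
      ← Real.rpow_mul hL0.le, ← Real.rpow_mul ht0.le,
      show -(4 / α) * α = -(4 : ℝ) by field_simp, Real.rpow_neg ht0.le,
      show (4 : ℝ) = ((4 : ℕ) : ℝ) by norm_num, Real.rpow_natCast]
  have hεα0 : (0 : ℝ) < ε ^ α := Real.rpow_pos_of_pos hε0 _
  -- the set equality
  have hone : α / 2 * (2 / α) = 1 := by field_simp
  have hone' : (2 / α) * (α / 2) = 1 := by field_simp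
  have hset : {ω | t < Y ω ^ (α / 2)} = {ω | L * ε ^ (-(1 / 2 : ℝ)) < Y ω} := by
    ext ω
    simp only [mem_setOf_eq, hkey]
    constructor
    · intro hw
      have := Real.rpow_lt_rpow ht0.le hw (by positivity : (0 : ℝ) < 2 / α)
      rwa [← Real.rpow_mul (hpos ω), hone, Real.rpow_one] at this
    · intro hw
      have := Real.rpow_lt_rpow (Real.rpow_nonneg ht0.le _) hw
        (by positivity : (0 : ℝ) < α / 2)
      rwa [← Real.rpow_mul ht0.le, hone', Real.rpow_one] at this
  rw [hset]
  set S := {ω | L * ε ^ (-(1 / 2 : ℝ)) < Y ω} with hS_def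
  have hcond := hsub ⟨hε0, hεδ⟩
  simp only [mem_setOf_eq] at hcond
  by_cases hP0 : P S = 0
  · simp [hP0]
  · have hPtop : P S ≠ ⊤ := measure_ne_top P S
    set p : ℝ := (P S).toReal with hp_def
    have hp : 0 < p := ENNReal.toReal_pos hP0 hPtop
    rw [ENNReal.log_pos_real hP0 hPtop, ← EReal.coe_mul] at hcond
    have hr : ε ^ α * Real.log p < η / 2 := EReal.coe_lt_coe_iff.mp hcond
    have hlog : Real.log p < (η / 2) / ε ^ α := by
      rw [lt_div_iff₀ hεα0]; linarith
    have hpexp : p < Real.exp ((η / 2) / ε ^ α) := by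
      calc p = Real.exp (Real.log p) := (Real.exp_log hp).symm
        _ < Real.exp ((η / 2) / ε ^ α) := Real.exp_lt_exp.mpr hlog
    have ht24 : t ^ 2 ≤ t ^ 4 := pow_le_pow_right₀ ht1.le (by norm_num)
    have hfin : (η / 2) / ε ^ α ≤ -(-η / (2 * A)) * t ^ 2 := by
      rw [hεα]
      have hlhs : (η / 2) / (A * (t ^ 4)⁻¹) = η * t ^ 4 / (2 * A) := by
        field_simp
      have hrhs : -(-η / (2 * A)) * t ^ 2 = η * t ^ 2 / (2 * A) := by
        field_simp
      rw [hlhs, hrhs]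
      exact (div_le_div_iff_of_pos_right (by positivity : (0:ℝ) < 2 * A)).mpr (mul_le_mul_of_nonpos_left ht24 hη.le)
    calc P S = ENNReal.ofReal p := (ENNReal.ofReal_toReal hPtop).symm
      _ ≤ ENNReal.ofReal (Real.exp (-(-η / (2 * A)) * t ^ 2)) :=
        ENNReal.ofReal_le_ofReal
          (le_of_lt (lt_of_lt_of_le hpexp (Real.exp_le_exp.mpr hfin)))
end

section
/- (Abstract core of Theorems 2 and 3) Let {Z_ε}_{ε>0} be a family of real random variables and suppose there are constants c > 0, κ₁ > −1/2 and κ₂ ≥ 1 such that (E[|Z_ε|^n])^{1/n} ≤ c·ε^{κ₁}·n^{κ₂} for every integer n ≥ 1 and every ε ∈ (0,1). Then for every α with 0 < α < (1/2 + κ₁)/κ₂, the family {√ε·Z_ε}_{ε>0} is exponentially tight with speed v(ε) = ε^α; that is, lim_{L→∞} limsup_{ε→0⁺} ε^α · log P(√ε·|Z_ε| > L) = −∞. -/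
/-!
Apply Markov's inequality to the moment of order `n = ⌈ε ^ (-α)⌉`:
`P(√ε |Z_ε| > L) ≤ (√ε ‖Z_ε‖ₙ / L) ^ n ≤ (c 2 ^ κ₂ ε ^ (1/2 + κ₁ - α κ₂) / L) ^ n`,
and the base is at most `c 2 ^ κ₂ / L`. Since `ε ^ α n ≥ 1`, this gives
`ε ^ α log P(√ε |Z_ε| > L) ≤ log (c 2 ^ κ₂ / L)` once `L > c 2 ^ κ₂`, uniformly in `ε ∈ (0, 1)`,
and the right-hand side tends to `-∞` with `L`.
-/

open MeasureTheory Filter Set Topology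

lemma measure_lt_mul_abs_le_of_moment_le {Ω : Type*} [MeasurableSpace Ω] {μ : Measure Ω}
    {X : Ω → ℝ} (hX : Measurable X) {p M s L : ℝ} (hp : 0 < p) (hM : 0 ≤ M) (hs : 0 < s)
    (hL : 0 < L) (hmom : (∫⁻ ω, ENNReal.ofReal (|X ω| ^ p) ∂μ) ^ (1 / p) ≤ ENNReal.ofReal M) :
    μ {ω | L < s * |X ω|} ≤ ENNReal.ofReal ((s * M / L) ^ p) := by
  have hint : ∫⁻ ω, ENNReal.ofReal (|X ω| ^ p) ∂μ ≤ ENNReal.ofReal (M ^ p) :=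
    calc ∫⁻ ω, ENNReal.ofReal (|X ω| ^ p) ∂μ
        = ((∫⁻ ω, ENNReal.ofReal (|X ω| ^ p) ∂μ) ^ (1 / p)) ^ p := by
          rw [← ENNReal.rpow_mul, one_div_mul_cancel hp.ne', ENNReal.rpow_one]
      _ ≤ ENNReal.ofReal M ^ p := ENNReal.rpow_le_rpow hmom hp.le
      _ = ENNReal.ofReal (M ^ p) := ENNReal.ofReal_rpow_of_nonneg hM hp.le
  have hLs : 0 < (L / s) ^ p := by positivity
  have hsub : {ω | L < s * |X ω|} ⊆
      {ω | ENNReal.ofReal ((L / s) ^ p) ≤ ENNReal.ofReal (|X ω| ^ p)} := by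
    intro ω hω
    have : L / s ≤ |X ω| := by rw [div_le_iff₀ hs]; linarith [hω.out]
    exact ENNReal.ofReal_le_ofReal (Real.rpow_le_rpow (by positivity) this hp.le)
  calc μ {ω | L < s * |X ω|}
      ≤ μ {ω | ENNReal.ofReal ((L / s) ^ p) ≤ ENNReal.ofReal (|X ω| ^ p)} := measure_mono hsub
    _ ≤ (∫⁻ ω, ENNReal.ofReal (|X ω| ^ p) ∂μ) / ENNReal.ofReal ((L / s) ^ p) :=
        meas_ge_le_lintegral_div (by fun_prop) (by simpa using hLs) ENNReal.ofReal_ne_top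
    _ ≤ ENNReal.ofReal (M ^ p) / ENNReal.ofReal ((L / s) ^ p) := by gcongr
    _ = ENNReal.ofReal ((s * M / L) ^ p) := by
        rw [← ENNReal.ofReal_div_of_pos hLs, ← Real.div_rpow hM (by positivity)]
        congr 2
        field_simp

lemma sqrt_mul_mul_rpow_le {c κ₁ κ₂ α ε x : ℝ} (hc : 0 ≤ c) (hκ₂ : 0 ≤ κ₂)
    (hακ : α * κ₂ ≤ 1 / 2 + κ₁) (hε0 : 0 < ε) (hε1 : ε ≤ 1) (hx0 : 0 ≤ x)
    (hx : x ≤ 2 * ε ^ (-α)) :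
    √ε * (c * ε ^ κ₁ * x ^ κ₂) ≤ c * 2 ^ κ₂ :=
  calc √ε * (c * ε ^ κ₁ * x ^ κ₂)
      ≤ √ε * (c * ε ^ κ₁ * (2 * ε ^ (-α)) ^ κ₂) := by gcongr
    _ = c * 2 ^ κ₂ * ε ^ (1 / 2 + κ₁ - α * κ₂) := by
        rw [Real.mul_rpow zero_le_two (by positivity), ← Real.rpow_mul hε0.le, Real.sqrt_eq_rpow,
          sub_eq_add_neg, Real.rpow_add hε0, Real.rpow_add hε0, neg_mul]
        ring
    _ ≤ c * 2 ^ κ₂ := by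
        refine mul_le_of_le_one_right (by positivity) ?_
        exact Real.rpow_le_one hε0.le hε1 (by linarith)

lemma coe_mul_log_le_log_of_le_ofReal_rpow {t k q b : ℝ} {p : ENNReal} (ht : 0 ≤ t)
    (hk : 1 ≤ t * k) (hq : 0 < q) (hqb : q ≤ b) (hb : b ≤ 1)
    (hp : p ≤ ENNReal.ofReal (q ^ k)) :
    (t : EReal) * ENNReal.log p ≤ Real.log b := by
  have hk0 : 0 ≤ k := by
    by_contra! h
    nlinarith
  have hlogb : Real.log b ≤ 0 := Real.log_nonpos (hq.trans_le hqb).le hb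
  have hlogp : ENNReal.log p ≤ (k * Real.log q : ℝ) := by
    have := ENNReal.log_monotone hp
    rwa [ENNReal.log_ofReal_of_pos (by positivity), Real.log_rpow hq] at this
  have hreal : t * (k * Real.log q) ≤ Real.log b :=
    calc t * (k * Real.log q) ≤ t * k * Real.log b := by
          rw [← mul_assoc]; gcongr
      _ ≤ Real.log b := by nlinarith
  calc (t : EReal) * ENNReal.log p ≤ (t : EReal) * (k * Real.log q : ℝ) :=
        mul_le_mul_of_nonneg_left hlogp (by exact_mod_cast ht)
    _ ≤ Real.log b := by exact_mod_cast hreal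

lemma tendsto_limsup_nhds_bot_of_le_log_div {ι : Type*} {l : Filter ι} {f : ℝ → ι → EReal}
    {C : ℝ} (hC : 0 < C) (h : ∀ L > C, ∀ᶠ i in l, f L i ≤ Real.log (C / L)) :
    Tendsto (fun L => limsup (f L) l) atTop (𝓝 ⊥) := by
  have hlog : Tendsto (fun L : ℝ => ((Real.log (C / L) : ℝ) : EReal)) atTop (𝓝 ⊥) := by
    have hdiv : Tendsto (fun L : ℝ => C / L) atTop (𝓝[>] 0) :=
      tendsto_nhdsWithin_of_tendsto_nhds_of_eventually_within _
        (tendsto_const_nhds.div_atTop tendsto_id)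
        (eventually_gt_atTop 0 |>.mono fun L hL => div_pos hC hL)
    exact EReal.tendsto_coe_atBot.comp (Real.tendsto_log_nhdsGT_zero.comp hdiv)
  refine tendsto_nhds_bot_mono hlog ?_
  filter_upwards [eventually_gt_atTop C] with L hL
  exact limsup_le_of_le (by isBoundedDefault) (h L hL)

lemma rpow_mul_log_measure_lt_sqrt_mul_abs_le {Ω : Type*} [MeasurableSpace Ω] {μ : Measure Ω}
    {X : Ω → ℝ} (hX : Measurable X) {c κ₁ κ₂ α ε L : ℝ} (hc : 0 < c) (hκ₂ : 0 ≤ κ₂)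
    (hα : 0 < α) (hακ : α * κ₂ ≤ 1 / 2 + κ₁) (hε0 : 0 < ε) (hε1 : ε ≤ 1)
    (hL : c * 2 ^ κ₂ < L)
    (hmom : ∀ n : ℕ, 1 ≤ n →
      (∫⁻ ω, ENNReal.ofReal (|X ω| ^ (n : ℝ)) ∂μ) ^ (1 / (n : ℝ)) ≤
        ENNReal.ofReal (c * ε ^ κ₁ * (n : ℝ) ^ κ₂)) :
    ((ε ^ α : ℝ) : EReal) * ENNReal.log (μ {ω | L < √ε * |X ω|}) ≤
      Real.log (c * 2 ^ κ₂ / L) := by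
  set n := ⌈ε ^ (-α)⌉₊
  have hεn : 1 ≤ ε ^ (-α) := Real.one_le_rpow_of_pos_of_le_one_of_nonpos hε0 hε1 (by linarith)
  have hn_le : (n : ℝ) ≤ 2 * ε ^ (-α) := Nat.ceil_le_two_mul (by linarith)
  have hn_ge : 1 ≤ ε ^ α * n :=
    calc 1 = ε ^ α * ε ^ (-α) := by rw [← Real.rpow_add hε0, add_neg_cancel, Real.rpow_zero]
      _ ≤ ε ^ α * n := by gcongr; exact Nat.le_ceil _
  have hn : 1 ≤ n := Nat.one_le_cast.mp (hεn.trans (Nat.le_ceil _))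
  have hL0 : 0 < L := lt_of_le_of_lt (by positivity) hL
  refine coe_mul_log_le_log_of_le_ofReal_rpow (by positivity) hn_ge (by positivity) ?_
    ((div_le_one hL0).mpr hL.le)
    (measure_lt_mul_abs_le_of_moment_le hX (by positivity) (by positivity)
      (Real.sqrt_pos.mpr hε0) hL0 (hmom n hn))
  exact div_le_div_of_nonneg_right
    (sqrt_mul_mul_rpow_le hc.le hκ₂ hακ hε0 hε1 (Nat.cast_nonneg n) hn_le) hL0.le

theorem stmt_11_general {Ω : Type*} [MeasurableSpace Ω] (P : Measure Ω)
    (c κ₁ κ₂ : ℝ) (hc : 0 < c) (hκ₂ : 1 ≤ κ₂)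
    (Z : ℝ → Ω → ℝ) (hmeas : ∀ ε, Measurable (Z ε))
    (hmom : ∀ n : ℕ, 1 ≤ n → ∀ ε ∈ Ioo (0 : ℝ) 1,
      (∫⁻ ω, ENNReal.ofReal (|Z ε ω| ^ (n : ℝ)) ∂P) ^ (1 / (n : ℝ)) ≤
        ENNReal.ofReal (c * ε ^ κ₁ * (n : ℝ) ^ κ₂))
    (α : ℝ) (hα0 : 0 < α) (hα : α < (1 / 2 + κ₁) / κ₂) :
    Tendsto (fun L : ℝ =>
        limsup (fun ε : ℝ => ((ε ^ α : ℝ) : EReal) *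
            ENNReal.log (P {ω | L < Real.sqrt ε * |Z ε ω|}))
          (nhdsWithin (0 : ℝ) (Ioi 0))) atTop (nhds (⊥ : EReal)) := by
  have hακ : α * κ₂ ≤ 1 / 2 + κ₁ := ((lt_div_iff₀ (by linarith)).mp hα).le
  refine tendsto_limsup_nhds_bot_of_le_log_div (C := c * 2 ^ κ₂) (by positivity) fun L hL => ?_
  filter_upwards [Ioo_mem_nhdsGT one_pos] with ε hε
  exact rpow_mul_log_measure_lt_sqrt_mul_abs_le (hmeas ε) hc (by linarith) hα0 hακ hε.1 hε.2.le
    hL (hmom · · ε hε)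

theorem stmt_11 {Ω : Type*} [MeasurableSpace Ω] (P : Measure Ω) [IsProbabilityMeasure P]
    (c κ₁ κ₂ : ℝ) (hc : 0 < c) (hκ₁ : -(1 / 2 : ℝ) < κ₁) (hκ₂ : 1 ≤ κ₂)
    (Z : ℝ → Ω → ℝ) (hmeas : ∀ ε, Measurable (Z ε))
    (hmom : ∀ n : ℕ, 1 ≤ n → ∀ ε ∈ Ioo (0 : ℝ) 1,
      (∫⁻ ω, ENNReal.ofReal (|Z ε ω| ^ (n : ℝ)) ∂P) ^ (1 / (n : ℝ)) ≤
        ENNReal.ofReal (c * ε ^ κ₁ * (n : ℝ) ^ κ₂))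
    (α : ℝ) (hα0 : 0 < α) (hα : α < (1 / 2 + κ₁) / κ₂) :
    Tendsto (fun L : ℝ =>
        limsup (fun ε : ℝ => ((ε ^ α : ℝ) : EReal) *
            ENNReal.log (P {ω | L < Real.sqrt ε * |Z ε ω|}))
          (nhdsWithin (0 : ℝ) (Ioi 0))) atTop (nhds (⊥ : EReal)) :=
  stmt_11_general P c κ₁ κ₂ hc hκ₂ Z hmeas hmom α hα0 hα
end
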